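/- Transition probability, initializing phase: in the stationary simple random walk Y on G_K started at a vertex a whose digit sequence has N ≥ 2 constancy blocks of lengths M_1,...,M_N, the conditional probability that the step changes exactly one digit in the first block is P(ε_1 = 1 | Y(0) = a) = M_1/(M_1 + 1 + x_2^N), where x_2^N = [M_2; M_3,...,M_N,1] is the continued fraction 1/(M_2 + 1/(M_3 + ... + 1/(M_N+1))). -/

import Mathlib

open MeasureTheory ProbabilityTheory Finset

noncomputable section

/-- The sample space of the coupled construction: `ε`, `(α_k)`, `(β_k)`. -/
abbrev Omega (K : ℕ) := Bool × (Fin K → Fin 3) × (Fin K → Bool)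

/-- The uniform probability measure on `Omega K`; its coordinates are independent,
`ε` is uniform on `{-1,1}` (via `Bool`), each `α_k` is Bernoulli(1/3)
(`α_k = 1` iff the `Fin 3` coordinate equals `0`), each `β_k` uniform on `{-1,1}`. -/
def unif (K : ℕ) : Measure (Omega K) := (PMF.uniformOfFintype (Omega K)).toMeasure

def sgn (b : Bool) : ℤ := if b then 1 else -1

def epsRV {K : ℕ} (ω : Omega K) : ℤ := sgn ω.1

def alphaRV {K : ℕ} (k : Fin K) (ω : Omega K) : ℤ := if ω.2.1 k = 0 then 1 else 0

def alphaN {K : ℕ} (k : Fin K) (ω : Omega K) : ℕ := if ω.2.1 k = 0 then 1 else 0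

def betaRV {K : ℕ} (k : Fin K) (ω : Omega K) : ℤ := sgn (ω.2.2 k)

/-- `γ_{j+1} = ε · (-1)^{α_1 + ⋯ + α_j}` (0-indexed: `gammaRV j` is the paper's `γ_{j+1}`). -/
def gammaRV {K : ℕ} (j : ℕ) (ω : Omega K) : ℤ :=
  epsRV ω * (-1) ^ (∑ k ∈ Finset.univ.filter (fun k : Fin K => (k : ℕ) < j), alphaN k ω)

/-- `A_k = (1-α_k)β_k + α_k γ_k`. -/
def ARV {K : ℕ} (k : Fin K) (ω : Omega K) : ℤ :=
  (1 - alphaRV k ω) * betaRV k ω + alphaRV k ω * gammaRV (k : ℕ) ω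

/-- `B_k = (1-α_k)β_k - α_k γ_k`. -/
def BRV {K : ℕ} (k : Fin K) (ω : Omega K) : ℤ :=
  (1 - alphaRV k ω) * betaRV k ω - alphaRV k ω * gammaRV (k : ℕ) ω

/-- The nonzero coordinates of `v - u` have alternating signs: whenever `i < j` are
two "changed" coordinates with no changed coordinate strictly between them,
the changes have opposite signs. -/
def AltSigns {K : ℕ} (u v : Fin K → ℤ) : Prop :=
  ∀ i j : Fin K, i < j → u i ≠ v i → u j ≠ v j →
    (∀ l : Fin K, i < l → l < j → u l = v l) → v i - u i = -(v j - u j)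

/-- The first nonzero coordinate of `v - u` is negative if `s = true` (positive edges `E⁺`),
positive if `s = false` (negative edges `E⁻`). -/
def FirstSign {K : ℕ} (s : Bool) (u v : Fin K → ℤ) : Prop :=
  ∀ i : Fin K, u i ≠ v i → (∀ l : Fin K, l < i → u l = v l) →
    (if s then v i - u i < 0 else 0 < v i - u i)

/-- `(u,v)` is an edge of sign `s` of the multigraph `G_K`: either a loop (each vertex
carries one loop of each sign), or `u ≠ v` with alternating signs starting as dictated by `s`. -/
def IsEdge {K : ℕ} (s : Bool) (u v : Fin K → ℤ) : Prop :=
  u = v ∨ (u ≠ v ∧ AltSigns u v ∧ FirstSign s u v)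

/-- Interpret a Boolean vector as a vertex of `V_K = {-1,1}^K`. -/
def toPM {K : ℕ} (b : Fin K → Bool) : Fin K → ℤ := fun k => if b k then 1 else -1

/-- Partial sums `S_m = M_1 + ⋯ + M_m` of the block lengths. -/
def Ssum (M : ℕ → ℕ) (m : ℕ) : ℕ := ∑ k ∈ Finset.range m, M k

/-- 0-indexed block index of position `k` (positions `Ssum M j ≤ k < Ssum M (j+1)`
belong to block `j`). -/
def blk (M : ℕ → ℕ) (N : ℕ) (k : ℕ) : ℕ :=
  ((Finset.range N).filter (fun m => Ssum M (m + 1) ≤ k)).card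

/-- The vertex `a ∈ {-1,1}^K` whose maximal constancy blocks have lengths
`M_1, …, M_N` and whose first digit is `1` (so block `j` carries the value `(-1)^j`,
0-indexed). -/
def avert (M : ℕ → ℕ) (N : ℕ) {K : ℕ} : Fin K → ℤ :=
  fun k => if blk M N (k : ℕ) % 2 = 0 then 1 else -1

/-- Finite continued fraction: `cf [a₁, …, aₙ] = 1/(a₁ + 1/(a₂ + ⋯ + 1/(aₙ + 1)))`,
with `cf [] = 1`. -/
noncomputable def cf : List ℝ → ℝ
  | [] => 1
  | a :: l => 1 / (a + cf l)

/-- `x_j^N = [M_j; M_{j+1}, …, M_{N-1}, 1]` (0-indexed blocks `j, …, N-1`);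
for `j = N` this is the convention `x_{N+1}^N = 1`. -/
noncomputable def xcf (M : ℕ → ℕ) (N j : ℕ) : ℝ :=
  cf ((List.range (N - j)).map fun i => (M (j + i) : ℝ))

/-- `ε_j = 1`: the step of the walk changes a digit in the `j`-th (0-indexed)
constancy block, i.e. `B` differs from `A` at some position of block `j`. -/
def epsChange {K : ℕ} (M : ℕ → ℕ) (N : ℕ) (j : ℕ) (ω : Omega K) : Prop :=
  ∃ k : Fin K, blk M N (k : ℕ) = j ∧ BRV k ω ≠ ARV k ω

/-! The event `A = a` forces `β = a` off the support `S` of `α` (`2^|S|` choices of `β`, against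
`2^(K-|S|)` choices of `α` with support `S`), while on `S` it says that the digits of `a` along `S`
alternate, starting with `ε`. So every admissible pair `(ε, S)` has weight `2^K`, and conditional
probabilities given `A = a` are ratios of numbers of alternating subsets. Counting these block by
block (blocks are 0-indexed), with `u_j`, `v_j` the numbers of alternating subsets of the positions
from block `j` on that start with, resp. against, the digit of block `j`, gives
`u_j = M_j u_{j+1} + v_{j+1}` and `v_j = u_{j+1}`, so `v_j / u_j` obeys the recursion of the
continued fraction `x_j`. The event `ε_0 = 1` means that `S` meets block `0`; its complement has
`u_1 + v_1` admissible subsets, so the probability is `M_0 u_1 / (M_0 u_1 + v_1 + u_1)`. -/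

/-- The number of sets `S ⊆ {0, …, n-1}` along which the digits `b` alternate, starting with `σ`. -/
def altCount : ℕ → (ℕ → Bool) → Bool → ℕ
  | 0, _, _ => 1
  | n + 1, b, σ =>
    altCount n (fun i => b (i + 1)) σ + if b 0 = σ then altCount n (fun i => b (i + 1)) (!σ) else 0

lemma altCount_pos (n : ℕ) (b : ℕ → Bool) (σ : Bool) : 0 < altCount n b σ := by
  induction n generalizing b σ with
  | zero => simp [altCount]
  | succ n ih => exact Nat.add_pos_left (ih _ _) _

lemma altCount_add_of_const {m : ℕ} {b : ℕ → Bool} {c : Bool} (hb : ∀ i < m, b i = c) (n : ℕ) :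
    altCount (n + m) b c =
        m * altCount n (fun i => b (i + m)) (!c) + altCount n (fun i => b (i + m)) c ∧
      altCount (n + m) b (!c) = altCount n (fun i => b (i + m)) (!c) := by
  induction m generalizing b with
  | zero => simp
  | succ m ih =>
    obtain ⟨ih₁, ih₂⟩ := ih (b := fun i => b (i + 1)) fun i hi => hb (i + 1) (by omega)
    have hb0 : b 0 = c := hb 0 (by omega)
    refine ⟨?_, ?_⟩
    · rw [← add_assoc, altCount, if_pos hb0, ih₁, ih₂]
      simp only [add_assoc]
      ring
    · rw [← add_assoc, altCount, if_neg (by cases c <;> simp [hb0]), add_zero, ih₂]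
      simp only [add_assoc]

open scoped ENNReal in
lemma cond_uniformOfFintype_apply {α : Type*} [Fintype α] [Nonempty α] [MeasurableSpace α]
    [MeasurableSingletonClass α] (p q : α → Prop) [DecidablePred p] [DecidablePred q] :
    (PMF.uniformOfFintype α).toMeasure[{x | q x} | {x | p x}] =
      (#{x | p x ∧ q x} : ℝ≥0∞) / #{x | p x} := by
  rw [cond_apply (Set.toFinite _).measurableSet, ← Set.ofPred_and,
    PMF.toMeasure_uniformOfFintype_apply _ (Set.toFinite _).measurableSet,
    PMF.toMeasure_uniformOfFintype_apply _ (Set.toFinite _).measurableSet]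
  simp only [Fintype.card_ofFinset, Set.mem_ofPred_eq]
  have hα : (Fintype.card α : ℝ≥0∞) ≠ 0 := by simp
  rw [ENNReal.inv_div (.inl (ENNReal.natCast_ne_top _)) (.inl hα), mul_comm, ← mul_div_assoc,
    ENNReal.div_mul_cancel hα (ENNReal.natCast_ne_top _)]

lemma card_filter_cons {X Y : Type*} [Fintype X] [Fintype Y] {K : ℕ}
    (P : (Fin (K + 1) → X) × (Fin (K + 1) → Y) → Prop) [DecidablePred P] :
    #{p | P p} =
      ∑ a, ∑ c, #{q : (Fin K → X) × (Fin K → Y) | P (Fin.cons a q.1, Fin.cons c q.2)} := by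
  let e := (Equiv.prodProdProdComm X Y (Fin K → X) (Fin K → Y)).trans
    ((Fin.consEquiv fun _ => X).prodCongr (Fin.consEquiv fun _ => Y))
  simp only [Finset.card_filter]
  rw [← Fintype.sum_equiv e _ _ fun _ => rfl]
  simp only [Fintype.sum_prod_type]
  rfl

lemma sgn_inj {a b : Bool} : sgn a = sgn b ↔ a = b := by
  cases a <;> cases b <;> simp [sgn]

lemma sgn_xor (σ d : Bool) : sgn (σ ^^ d) = sgn σ * (-1) ^ (if d then 1 else 0) := by
  cases σ <;> cases d <;> simp [sgn]

lemma gammaRV_cons {K : ℕ} (σ : Bool) (a : Fin 3) (c : Bool) (α : Fin K → Fin 3)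
    (β : Fin K → Bool) (j : ℕ) :
    gammaRV (j + 1) ((σ, Fin.cons a α, Fin.cons c β) : Omega (K + 1)) =
      gammaRV j ((σ ^^ decide (a = 0), α, β) : Omega K) := by
  simp only [gammaRV, epsRV, Finset.sum_filter, Fin.sum_univ_succ, sgn_xor, alphaN]
  by_cases ha : a = 0 <;> simp [ha, pow_add]

lemma ARV_cons_zero {K : ℕ} (σ : Bool) (a : Fin 3) (c : Bool) (α : Fin K → Fin 3)
    (β : Fin K → Bool) :
    ARV 0 ((σ, Fin.cons a α, Fin.cons c β) : Omega (K + 1)) = sgn (if a = 0 then σ else c) := by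
  by_cases ha : a = 0 <;> simp [ARV, alphaRV, betaRV, gammaRV, epsRV, ha]

lemma ARV_cons_succ {K : ℕ} (σ : Bool) (a : Fin 3) (c : Bool) (α : Fin K → Fin 3)
    (β : Fin K → Bool) (k : Fin K) :
    ARV k.succ ((σ, Fin.cons a α, Fin.cons c β) : Omega (K + 1)) =
      ARV k ((σ ^^ decide (a = 0), α, β) : Omega K) := by
  simp only [ARV, alphaRV, betaRV, Fin.val_succ, gammaRV_cons, Fin.cons_succ]

/- Peeling off the first coordinate: `α_0 ≠ 0` (two values) forces `β_0`, while `α_0 = 0` leaves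
`β_0` free, needs `ε` to match the first digit and flips the sign for the remaining coordinates. -/
lemma card_ARV_eq (K : ℕ) (σ : Bool) (b : ℕ → Bool) (m : ℕ) :
    #{p : (Fin K → Fin 3) × (Fin K → Bool) |
        (∀ k, ARV k ((σ, p) : Omega K) = sgn (b k)) ∧ ∀ k : Fin K, (k : ℕ) < m → p.1 k ≠ 0} =
      2 ^ K * altCount (K - m) (fun i => b (i + m)) σ := by
  induction K generalizing σ b m with
  | zero => simp [altCount]
  | succ K ih =>
    rw [card_filter_cons]
    simp only [Fin.forall_fin_succ, ARV_cons_zero, ARV_cons_succ, Fin.cons_zero, Fin.cons_succ,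
      Fin.val_zero, Fin.val_succ, sgn_inj]
    cases m with
    | zero =>
      have ih' := fun σ => ih σ (fun i => b (i + 1)) 0
      simp only [not_lt_zero, false_imp_iff, imp_true_iff, and_true, tsub_zero, add_zero] at ih' ⊢
      simp only [Fin.sum_univ_three, Fintype.sum_bool]
      cases σ <;> cases h : b 0 <;> simp [h, ih', altCount] <;> ring
    | succ m =>
      have ih' := fun σ => ih σ (fun i => b (i + 1)) m
      simp only [Nat.add_lt_add_iff_right, add_assoc] at ih' ⊢
      simp only [Fin.sum_univ_three, Fintype.sum_bool]
      cases b 0 <;> simp [ih'] <;> ring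

lemma card_omega_ARV_eq (K : ℕ) (b : ℕ → Bool) (m : ℕ) :
    #{ω : Omega K | (∀ k, ARV k ω = sgn (b k)) ∧ ∀ k : Fin K, (k : ℕ) < m → ω.2.1 k ≠ 0} =
      2 ^ K * (altCount (K - m) (fun i => b (i + m)) true +
        altCount (K - m) (fun i => b (i + m)) false) := by
  rw [Finset.card_filter, Fintype.sum_prod_type, Fintype.sum_bool, mul_add]
  simp only [← Finset.card_filter, card_ARV_eq]

lemma Ssum_mono (M : ℕ → ℕ) {a b : ℕ} (h : a ≤ b) : Ssum M a ≤ Ssum M b :=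
  Finset.sum_le_sum_of_subset (Finset.range_subset_range.mpr h)

lemma blk_eq {M : ℕ → ℕ} {N j k : ℕ} (hj : j < N) (h₁ : Ssum M j ≤ k)
    (h₂ : k < Ssum M (j + 1)) : blk M N k = j := by
  rw [blk, ← Finset.card_range j]
  congr 1
  ext m
  simp only [Finset.mem_filter, Finset.mem_range]
  constructor
  · rintro ⟨-, hm⟩
    by_contra! hjm
    exact absurd (Ssum_mono M (show j + 1 ≤ m + 1 by omega)) (by omega)
  · intro hm
    exact ⟨by omega, (Ssum_mono M hm).trans h₁⟩

lemma blk_eq_zero_iff (M : ℕ → ℕ) {N : ℕ} (hN : 0 < N) (k : ℕ) : blk M N k = 0 ↔ k < M 0 := by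
  have hS : Ssum M 1 = M 0 := Finset.sum_range_one M
  refine ⟨fun h => ?_, fun h => blk_eq hN (Nat.zero_le _) (hS ▸ h)⟩
  by_contra! hk
  have : 0 ∈ (Finset.range N).filter (fun m => Ssum M (m + 1) ≤ k) := by
    simp [hN, hS, hk]
  exact (Finset.card_pos.mpr ⟨0, this⟩).ne' h

def avertDigit (M : ℕ → ℕ) (N k : ℕ) : Bool := decide (blk M N k % 2 = 0)

lemma avert_eq_sgn (M : ℕ → ℕ) (N : ℕ) {K : ℕ} (k : Fin K) :
    avert M N k = sgn (avertDigit M N k) := by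
  by_cases h : blk M N k % 2 = 0 <;> simp [avert, avertDigit, sgn, h]

def tailCount (M : ℕ → ℕ) (N j : ℕ) (σ : Bool) : ℕ :=
  altCount (Ssum M N - Ssum M j) (fun i => avertDigit M N (i + Ssum M j)) σ

lemma tailCount_of_lt {M : ℕ → ℕ} {N j : ℕ} (hj : j < N) :
    tailCount M N j (decide (j % 2 = 0)) =
        M j * tailCount M N (j + 1) (decide ((j + 1) % 2 = 0)) +
          tailCount M N (j + 1) (!decide ((j + 1) % 2 = 0)) ∧
      tailCount M N j (!decide (j % 2 = 0)) =
        tailCount M N (j + 1) (decide ((j + 1) % 2 = 0)) := by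
  have hS : Ssum M (j + 1) = Ssum M j + M j := Finset.sum_range_succ M j
  have hlen : Ssum M N - Ssum M j = (Ssum M N - Ssum M (j + 1)) + M j := by
    have := Ssum_mono M (show j + 1 ≤ N by omega); omega
  have hpar : decide ((j + 1) % 2 = 0) = !decide (j % 2 = 0) := by
    rcases Nat.mod_two_eq_zero_or_one j with h | h <;> simp [Nat.add_mod, h]
  have hconst : ∀ i < M j, avertDigit M N (i + Ssum M j) = decide (j % 2 = 0) := fun i hi => by
    rw [avertDigit, blk_eq hj (by omega) (by omega)]
  obtain ⟨h₁, h₂⟩ := altCount_add_of_const hconst (Ssum M N - Ssum M (j + 1))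
  have hshift : (fun i => avertDigit M N (i + M j + Ssum M j)) =
      fun i => avertDigit M N (i + Ssum M (j + 1)) := by
    funext i; rw [hS]; ring_nf
  simp only [tailCount, hlen, hpar, Bool.not_not, h₁, h₂, hshift, and_self]

lemma xcf_eq_of_lt (M : ℕ → ℕ) {N j : ℕ} (hj : j < N) :
    xcf M N j = 1 / ((M j : ℝ) + xcf M N (j + 1)) := by
  have hNj : N - j = (N - (j + 1)) + 1 := by omega
  rw [xcf, hNj, List.range_succ_eq_map, List.map_cons, cf, xcf, List.map_map]
  congr 3
  refine List.map_congr_left fun i _ => ?_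
  simp [Nat.add_assoc, Nat.add_comm 1 i]

lemma xcf_eq_tailCount_div (M : ℕ → ℕ) {N j : ℕ} (hj : j ≤ N) :
    xcf M N j =
      tailCount M N j (!decide (j % 2 = 0)) / tailCount M N j (decide (j % 2 = 0)) := by
  induction hj using Nat.decreasingInduction with
  | self => simp [xcf, cf, tailCount, altCount]
  | of_succ j hj ih =>
    obtain ⟨h₁, h₂⟩ := tailCount_of_lt hj
    have hpos : (0 : ℝ) < tailCount M N (j + 1) (decide ((j + 1) % 2 = 0)) :=
      Nat.cast_pos.mpr (altCount_pos _ _ _)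
    rw [xcf_eq_of_lt M hj, ih, h₁, h₂]
    push_cast
    field_simp

lemma BRV_ne_ARV_iff {K : ℕ} (ω : Omega K) (k : Fin K) : BRV k ω ≠ ARV k ω ↔ ω.2.1 k = 0 := by
  have hγ : gammaRV (k : ℕ) ω ≠ 0 := by
    unfold gammaRV epsRV sgn
    split_ifs <;> simp
  by_cases h : ω.2.1 k = 0
  · simp only [BRV, ARV, alphaRV, h, if_true, ne_eq, iff_true]
    omega
  · simp [BRV, ARV, alphaRV, h]

lemma not_epsChange_zero_iff (M : ℕ → ℕ) {N K : ℕ} (hN : 0 < N) (ω : Omega K) :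
    ¬ epsChange M N 0 ω ↔ ∀ k : Fin K, (k : ℕ) < M 0 → ω.2.1 k ≠ 0 := by
  simp [epsChange, blk_eq_zero_iff M hN, BRV_ne_ARV_iff]

lemma card_avert_avoiding_blocks (M : ℕ → ℕ) {N K : ℕ} (hK : Ssum M N = K) (j : ℕ) :
    #{ω : Omega K | (∀ k, ARV k ω = avert M N k) ∧
        ∀ k : Fin K, (k : ℕ) < Ssum M j → ω.2.1 k ≠ 0} =
      2 ^ K * (tailCount M N j true + tailCount M N j false) := by
  simp only [avert_eq_sgn, card_omega_ARV_eq, tailCount, hK]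

lemma card_avert (M : ℕ → ℕ) {N K : ℕ} (hN : 0 < N) (hK : Ssum M N = K) :
    #{ω : Omega K | ∀ k, ARV k ω = avert M N k} =
      2 ^ K * (M 0 * tailCount M N 1 false + tailCount M N 1 true + tailCount M N 1 false) := by
  obtain ⟨h₀, h₀'⟩ := tailCount_of_lt (M := M) hN
  have h := card_avert_avoiding_blocks M hK 0
  simp only [Ssum, Finset.sum_range_zero, not_lt_zero, false_imp_iff, imp_true_iff,
    and_true] at h
  norm_num at h₀ h₀'
  rw [h, h₀, h₀']

open Classical in
lemma card_avert_epsChange (M : ℕ → ℕ) {N K : ℕ} (hN : 0 < N) (hK : Ssum M N = K) :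
    #{ω : Omega K | (∀ k, ARV k ω = avert M N k) ∧ epsChange M N 0 ω} =
      2 ^ K * (M 0 * tailCount M N 1 false) := by
  have hnot := card_avert_avoiding_blocks M hK 1
  simp only [show Ssum M 1 = M 0 from Finset.sum_range_one M, ← not_epsChange_zero_iff M hN]
    at hnot
  have hsplit := Finset.card_filter_add_card_filter_not
    (s := {ω : Omega K | ∀ k, ARV k ω = avert M N k}) (fun ω => epsChange M N 0 ω)
  rw [Finset.filter_filter, Finset.filter_filter, hnot, card_avert M hN hK] at hsplit
  zify at hsplit ⊢
  linear_combination hsplit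

theorem stmt14_general (K N : ℕ) (M : ℕ → ℕ) (hN : 2 ≤ N)
    (hK : ∑ m ∈ Finset.range N, M m = K) :
    ProbabilityTheory.cond (unif K) {ω | ∀ k : Fin K, ARV k ω = avert M N k}
        {ω | epsChange M N 0 ω} =
      ENNReal.ofReal ((M 0 : ℝ) / ((M 0 : ℝ) + 1 + xcf M N 1)) := by
  classical
  have hu : 0 < tailCount M N 1 false := altCount_pos _ _ _
  rw [unif, cond_uniformOfFintype_apply, card_avert_epsChange M (by omega) hK,
    card_avert M (by omega) hK, xcf_eq_tailCount_div M (j := 1) (by omega),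
    ← ENNReal.ofReal_natCast, ← ENNReal.ofReal_natCast,
    ← ENNReal.ofReal_div_of_pos (by positivity)]
  congr 1
  norm_num
  field_simp
  ring

/-- Initializing phase (Theorem 1): for a vertex `a` with `N ≥ 2` constancy blocks of
lengths `M_0, …, M_{N-1}` (0-indexed), the stationary walk on `G_K` satisfies
`P(ε_1 = 1 | Y(0) = a) = M_1/(M_1 + 1 + x_2^N)` — here block `0` plays the paper's
role of block `1`, and `xcf M N 1` is the continued fraction `x_2^N`. -/
theorem stmt14 (K N : ℕ) (M : ℕ → ℕ) (hN : 2 ≤ N) (hM : ∀ m < N, 0 < M m)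
    (hK : ∑ m ∈ Finset.range N, M m = K) :
    ProbabilityTheory.cond (unif K) {ω | ∀ k : Fin K, ARV k ω = avert M N k}
        {ω | epsChange M N 0 ω} =
      ENNReal.ofReal ((M 0 : ℝ) / ((M 0 : ℝ) + 1 + xcf M N 1)) :=
  stmt14_general K N M hN hK
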